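/- The commuting property [Z_j, Z_k] = 0 holds for the operators Z_j := ⟨ζ⟩^{-1}(hD_{z_j} − ζ_j) + (1/2)⟨ζ⟩^{-3}ζ_j(hD_z − ζ)² − ihD_{ζ_j} − (n/4)h⟨ζ⟩^{-2}ζ_j, j = 1,…,n, acting on holomorphic functions on the region where ⟨ζ⟩ = (1+ζ·ζ)^{1/2} is defined and nonvanishing. -/

import Mathlib

/-!
Write `A_m = ε ∂_{z_m} - ζ_m`, `E_j = ∂_{ζ_j}` and `Q = ∑ A_m²`, so that
`Z_k = a A_k + b_k Q - σ E_k - c_k` with `ε = h/i`, `σ = h` and coefficients depending on `ζ`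
only. The `A_m` commute with each other and with such coefficients, while `[E_j, A_m] = -δ_{jm}`
and `[E_j, Q] = -2 A_j`. Hence

  `[Z_j, Z_k] = σ ((∂_k a + 2 b_k) A_j - (∂_j a + 2 b_j) A_k - (∂_j b_k - ∂_k b_j) Q`
              `+ (∂_j c_k - ∂_k c_j))`,

which vanishes for `a = ⟨ζ⟩⁻¹`, `b_k = ½ ⟨ζ⟩⁻³ ζ_k`, `c_k = (n/4) h ⟨ζ⟩⁻² ζ_k` because
`∂_j ⟨ζ⟩ = ζ_j / ⟨ζ⟩`.
-/

open Complex

noncomputable section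

/-- The operator
`Z_j = ⟨ζ⟩^{-1}(hD_{z_j} − ζ_j) + (1/2)⟨ζ⟩^{-3}ζ_j(hD_z − ζ)² − ihD_{ζ_j} − (n/4)h⟨ζ⟩^{-2}ζ_j`. -/
def Zop (n : ℕ) (h : ℝ) (j : Fin n)
    (f : (Fin n → ℂ) × (Fin n → ℂ) → ℂ)
    (p : (Fin n → ℂ) × (Fin n → ℂ)) : ℂ :=
  let br : ℂ := (1 + ∑ k, (p.2 k) ^ 2) ^ ((1 : ℂ) / 2)
  br⁻¹ * (((h : ℂ) / Complex.I) * fderiv ℂ f p (Pi.single j 1, 0) - p.2 j * f p) +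
  (1 / 2) * (br ^ 3)⁻¹ * p.2 j *
    (∑ k, (((h : ℂ) / Complex.I) *
        fderiv ℂ (fun q : (Fin n → ℂ) × (Fin n → ℂ) =>
          ((h : ℂ) / Complex.I) * fderiv ℂ f q (Pi.single k 1, 0) - q.2 k * f q)
          p (Pi.single k 1, 0) -
      p.2 k * (((h : ℂ) / Complex.I) * fderiv ℂ f p (Pi.single k 1, 0) - p.2 k * f p))) -
  Complex.I * (((h : ℂ) / Complex.I) * fderiv ℂ f p (0, Pi.single j 1)) -
  ((n : ℂ) / 4) * (h : ℂ) * (br ^ 2)⁻¹ * p.2 j * f p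

/-- The region where `⟨ζ⟩ = (1+ζ·ζ)^{1/2}` is defined and nonvanishing (off the
branch cut). -/
def offCut (n : ℕ) (p : (Fin n → ℂ) × (Fin n → ℂ)) : Prop :=
  ¬((1 + ∑ k, (p.2 k) ^ 2).im = 0 ∧ (1 + ∑ k, (p.2 k) ^ 2).re ≤ 0)

open Filter Topology

section Calculus

variable {E : Type*} [NormedAddCommGroup E] [NormedSpace ℂ E]

theorem AnalyticAt.fderiv_apply {g : E → ℂ} {x : E} (hg : AnalyticAt ℂ g x) (v : E) :
    AnalyticAt ℂ (fun y => fderiv ℂ g y v) x :=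
  ((ContinuousLinearMap.apply ℂ ℂ v).analyticAt _).comp hg.fderiv

theorem AnalyticAt.fderiv_fderiv_apply_comm {g : E → ℂ} {x : E} (hg : AnalyticAt ℂ g x)
    (v w : E) :
    fderiv ℂ (fun y => fderiv ℂ g y w) x v = fderiv ℂ (fun y => fderiv ℂ g y v) x w := by
  have hdiff : DifferentiableAt ℂ (fderiv ℂ g) x := hg.fderiv.differentiableAt
  have hsymm : IsSymmSndFDerivAt ℂ g x := (hg.contDiffAt (n := 2)).isSymmSndFDerivAt (by simp)
  rw [fderiv_clm_apply hdiff (differentiableAt_const _),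
    fderiv_clm_apply hdiff (differentiableAt_const _)]
  simpa using hsymm v w

theorem fderiv_pow_inv_apply {u : E → ℂ} {x : E} (hu : DifferentiableAt ℂ u x) (hx : u x ≠ 0)
    (m : ℕ) (v : E) :
    fderiv ℂ (fun y => (u y ^ m)⁻¹) x v = -(m * fderiv ℂ u x v) * (u x ^ (m + 1))⁻¹ := by
  have h : HasFDerivAt (fun y => (u y ^ m)⁻¹) _ x :=
    ((hasDerivAt_pow m (u x)).inv (pow_ne_zero m hx)).comp_hasFDerivAt x hu.hasFDerivAt
  rw [h.fderiv]
  rcases m with _ | m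
  · simp
  · simp only [smul_apply, smul_eq_mul, Nat.add_sub_cancel]
    field_simp
    ring

theorem fderiv_comp_snd_apply {F : Type*} [NormedAddCommGroup F] [NormedSpace ℂ F] {φ : F → ℂ}
    {q : E × F} (hφ : DifferentiableAt ℂ φ q.2) (v : E × F) :
    fderiv ℂ (fun q : E × F => φ q.2) q v = fderiv ℂ φ q.2 v.2 := by
  have := (hφ.hasFDerivAt.comp q (hasFDerivAt_snd (p := q))).fderiv
  exact congr($this v)

end Calculus

theorem AnalyticAt.eventually_comp_snd {X F : Type*} [TopologicalSpace X] [NormedAddCommGroup F]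
    [NormedSpace ℂ F] {φ : F → ℂ} {q : X × F} (hφ : AnalyticAt ℂ φ q.2) :
    ∀ᶠ y in 𝓝 q, AnalyticAt ℂ φ y.2 :=
  (continuous_snd.tendsto q).eventually hφ.eventually_analyticAt

section Coordinates

variable {ι : Type*}

theorem analyticAt_eval [Fintype ι] (ζ : ι → ℂ) (k : ι) : AnalyticAt ℂ (fun ζ : ι → ℂ => ζ k) ζ :=
  (ContinuousLinearMap.proj (R := ℂ) (φ := fun _ : ι => ℂ) k).analyticAt ζ

theorem fderiv_eval_apply (ζ v : ι → ℂ) (k : ι) : fderiv ℂ (fun ζ : ι → ℂ => ζ k) ζ v = v k := by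
  simp [(hasFDerivAt_apply (𝕜 := ℂ) k ζ).fderiv]

end Coordinates

namespace FBI

abbrev PhaseSpace (n : ℕ) := (Fin n → ℂ) × (Fin n → ℂ)

variable {n : ℕ}

def Aop (ε : ℂ) (m : Fin n) (g : PhaseSpace n → ℂ) (q : PhaseSpace n) : ℂ :=
  ε * fderiv ℂ g q (Pi.single m 1, 0) - q.2 m * g q

def Eop (j : Fin n) (g : PhaseSpace n → ℂ) (q : PhaseSpace n) : ℂ :=
  fderiv ℂ g q (0, Pi.single j 1)

def Qop (ε : ℂ) (g : PhaseSpace n → ℂ) (q : PhaseSpace n) : ℂ :=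
  ∑ m, Aop ε m (Aop ε m g) q

def zetaComb (σ : ℂ) (α β γ : (Fin n → ℂ) → ℂ) (F G H K : PhaseSpace n → ℂ)
    (q : PhaseSpace n) : ℂ :=
  α q.2 * F q + β q.2 * G q - σ * H q - γ q.2 * K q

def Zgen (ε σ : ℂ) (a : (Fin n → ℂ) → ℂ) (b c : Fin n → (Fin n → ℂ) → ℂ) (k : Fin n)
    (g : PhaseSpace n → ℂ) : PhaseSpace n → ℂ :=
  zetaComb σ a (b k) (c k) (Aop ε k g) (Qop ε g) (Eop k g) g

variable {ε σ : ℂ} {g F G H K : PhaseSpace n → ℂ} {α β γ : (Fin n → ℂ) → ℂ} {q : PhaseSpace n}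

theorem analyticAt_Aop (hg : AnalyticAt ℂ g q) (m : Fin n) : AnalyticAt ℂ (Aop ε m g) q :=
  (analyticAt_const.mul (hg.fderiv_apply _)).sub
    ((((ContinuousLinearMap.proj m).comp (ContinuousLinearMap.snd ℂ _ _)).analyticAt q).mul hg)

theorem analyticAt_Eop (hg : AnalyticAt ℂ g q) (j : Fin n) : AnalyticAt ℂ (Eop j g) q :=
  hg.fderiv_apply _

theorem analyticAt_Qop (hg : AnalyticAt ℂ g q) : AnalyticAt ℂ (Qop ε g) q :=
  Finset.analyticAt_fun_sum _ fun m _ => analyticAt_Aop (analyticAt_Aop hg m) m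

theorem Aop_congr (hFG : F =ᶠ[𝓝 q] G) (m : Fin n) : Aop ε m F q = Aop ε m G q := by
  rw [Aop, Aop, hFG.fderiv_eq, hFG.eq_of_nhds]

theorem Aop_sub_const_mul (hF : DifferentiableAt ℂ F q) (hG : DifferentiableAt ℂ G q) (c : ℂ)
    (m : Fin n) : Aop ε m (fun y => F y - c * G y) q = Aop ε m F q - c * Aop ε m G q := by
  simp only [Aop, fderiv_fun_sub hF (hG.const_mul c), fderiv_const_mul hG, sub_apply,
    smul_apply, smul_eq_mul]
  ring

theorem Aop_finset_sum {ι : Type*} (s : Finset ι) {F : ι → PhaseSpace n → ℂ}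
    (hF : ∀ i ∈ s, DifferentiableAt ℂ (F i) q) (m : Fin n) :
    Aop ε m (fun y => ∑ i ∈ s, F i y) q = ∑ i ∈ s, Aop ε m (F i) q := by
  simp only [Aop, fderiv_fun_sum hF, sum_apply, Finset.mul_sum, Finset.sum_sub_distrib]

theorem Eop_finset_sum {ι : Type*} (s : Finset ι) {F : ι → PhaseSpace n → ℂ}
    (hF : ∀ i ∈ s, DifferentiableAt ℂ (F i) q) (j : Fin n) :
    Eop j (fun y => ∑ i ∈ s, F i y) q = ∑ i ∈ s, Eop j (F i) q := by
  simp only [Eop, fderiv_fun_sum hF, sum_apply]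

theorem fderiv_Aop_apply (hg : AnalyticAt ℂ g q) (l : Fin n) (v : PhaseSpace n) :
    fderiv ℂ (Aop ε l g) q v =
      ε * fderiv ℂ (fun y => fderiv ℂ g y (Pi.single l 1, 0)) q v -
        (v.2 l * g q + q.2 l * fderiv ℂ g q v) := by
  have hζ : DifferentiableAt ℂ (fun y : PhaseSpace n => y.2 l) q := by fun_prop
  have hd := (hg.fderiv_apply (Pi.single l 1, 0)).differentiableAt
  unfold Aop
  rw [fderiv_fun_sub (hd.const_mul ε) (hζ.fun_mul hg.differentiableAt), fderiv_const_mul hd,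
    fderiv_fun_mul hζ hg.differentiableAt]
  simp only [sub_apply, add_apply, smul_apply, smul_eq_mul,
    fderiv_comp_snd_apply (differentiableAt_apply l q.2), fderiv_eval_apply]
  ring

theorem Aop_comm (hg : AnalyticAt ℂ g q) (i l : Fin n) :
    Aop ε i (Aop ε l g) q = Aop ε l (Aop ε i g) q := by
  simp only [Aop, fderiv_Aop_apply hg, hg.fderiv_fderiv_apply_comm (Pi.single i 1, 0)]
  simp only [Pi.zero_apply, zero_mul, zero_add]
  ring

theorem Eop_Aop (hg : AnalyticAt ℂ g q) (j l : Fin n) :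
    Eop j (Aop ε l g) q = Aop ε l (Eop j g) q - (Pi.single j 1 : Fin n → ℂ) l * g q := by
  simp only [Aop, Eop, fderiv_Aop_apply hg, hg.fderiv_fderiv_apply_comm (0, Pi.single j 1)]
  unfold Eop
  ring

theorem Eop_comm (hg : AnalyticAt ℂ g q) (j k : Fin n) :
    Eop j (Eop k g) q = Eop k (Eop j g) q :=
  hg.fderiv_fderiv_apply_comm _ _

theorem Aop_Qop (hg : AnalyticAt ℂ g q) (i : Fin n) :
    Aop ε i (Qop ε g) q = Qop ε (Aop ε i g) q := by
  have hnear : ∀ m, Aop ε i (Aop ε m g) =ᶠ[𝓝 q] Aop ε m (Aop ε i g) := fun m => by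
    filter_upwards [hg.eventually_analyticAt] with y hy using Aop_comm hy i m
  unfold Qop
  rw [Aop_finset_sum _ fun m _ => (analyticAt_Aop (analyticAt_Aop hg m) m).differentiableAt]
  refine Finset.sum_congr rfl fun m _ => ?_
  rw [Aop_comm (analyticAt_Aop hg m), Aop_congr (hnear m)]

theorem Eop_Qop (hg : AnalyticAt ℂ g q) (j : Fin n) :
    Eop j (Qop ε g) q = Qop ε (Eop j g) q - 2 * Aop ε j g q := by
  have hterm : ∀ m, Eop j (Aop ε m (Aop ε m g)) q =
      Aop ε m (Aop ε m (Eop j g)) q - 2 * ((Pi.single j 1 : Fin n → ℂ) m * Aop ε m g q) := by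
    intro m
    have hnear : Eop j (Aop ε m g) =ᶠ[𝓝 q]
        fun y => Aop ε m (Eop j g) y - (Pi.single j 1 : Fin n → ℂ) m * g y := by
      filter_upwards [hg.eventually_analyticAt] with y hy using Eop_Aop hy j m
    rw [Eop_Aop (analyticAt_Aop hg m), Aop_congr hnear,
      Aop_sub_const_mul (analyticAt_Aop (analyticAt_Eop hg j) m).differentiableAt
        hg.differentiableAt]
    ring
  unfold Qop
  rw [Eop_finset_sum _ fun m _ => (analyticAt_Aop (analyticAt_Aop hg m) m).differentiableAt]
  simp [hterm, Finset.sum_sub_distrib, Pi.single_apply]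

theorem fderiv_zetaComb_apply (hα : DifferentiableAt ℂ α q.2) (hβ : DifferentiableAt ℂ β q.2)
    (hγ : DifferentiableAt ℂ γ q.2) (hF : DifferentiableAt ℂ F q) (hG : DifferentiableAt ℂ G q)
    (hH : DifferentiableAt ℂ H q) (hK : DifferentiableAt ℂ K q) (v : PhaseSpace n) :
    fderiv ℂ (zetaComb σ α β γ F G H K) q v =
      zetaComb σ α β γ (fun y => fderiv ℂ F y v) (fun y => fderiv ℂ G y v)
          (fun y => fderiv ℂ H y v) (fun y => fderiv ℂ K y v) q +
        (fderiv ℂ α q.2 v.2 * F q + fderiv ℂ β q.2 v.2 * G q - fderiv ℂ γ q.2 v.2 * K q) := by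
  have hα' : DifferentiableAt ℂ (fun y : PhaseSpace n => α y.2) q := hα.comp q differentiableAt_snd
  have hβ' : DifferentiableAt ℂ (fun y : PhaseSpace n => β y.2) q := hβ.comp q differentiableAt_snd
  have hγ' : DifferentiableAt ℂ (fun y : PhaseSpace n => γ y.2) q := hγ.comp q differentiableAt_snd
  unfold zetaComb
  rw [fderiv_fun_sub ((hα'.fun_mul hF).fun_add (hβ'.fun_mul hG) |>.fun_sub (hH.const_mul σ))
      (hγ'.fun_mul hK), fderiv_fun_sub ((hα'.fun_mul hF).fun_add (hβ'.fun_mul hG)) (hH.const_mul σ),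
    fderiv_fun_add (hα'.fun_mul hF) (hβ'.fun_mul hG), fderiv_fun_mul hα' hF, fderiv_fun_mul hβ' hG,
    fderiv_fun_mul hγ' hK, fderiv_const_mul hH]
  simp only [sub_apply, add_apply, smul_apply, smul_eq_mul, fderiv_comp_snd_apply hα,
    fderiv_comp_snd_apply hβ, fderiv_comp_snd_apply hγ]
  ring

theorem Aop_zetaComb (hα : DifferentiableAt ℂ α q.2) (hβ : DifferentiableAt ℂ β q.2)
    (hγ : DifferentiableAt ℂ γ q.2) (hF : DifferentiableAt ℂ F q) (hG : DifferentiableAt ℂ G q)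
    (hH : DifferentiableAt ℂ H q) (hK : DifferentiableAt ℂ K q) (m : Fin n) :
    Aop ε m (zetaComb σ α β γ F G H K) q =
      zetaComb σ α β γ (Aop ε m F) (Aop ε m G) (Aop ε m H) (Aop ε m K) q := by
  simp only [Aop, fderiv_zetaComb_apply hα hβ hγ hF hG hH hK, zetaComb, map_zero]
  ring

theorem Eop_zetaComb (hα : DifferentiableAt ℂ α q.2) (hβ : DifferentiableAt ℂ β q.2)
    (hγ : DifferentiableAt ℂ γ q.2) (hF : DifferentiableAt ℂ F q) (hG : DifferentiableAt ℂ G q)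
    (hH : DifferentiableAt ℂ H q) (hK : DifferentiableAt ℂ K q) (j : Fin n) :
    Eop j (zetaComb σ α β γ F G H K) q =
      zetaComb σ α β γ (Eop j F) (Eop j G) (Eop j H) (Eop j K) q +
        (fderiv ℂ α q.2 (Pi.single j 1) * F q + fderiv ℂ β q.2 (Pi.single j 1) * G q -
          fderiv ℂ γ q.2 (Pi.single j 1) * K q) :=
  fderiv_zetaComb_apply hα hβ hγ hF hG hH hK _

theorem Qop_zetaComb (hα : AnalyticAt ℂ α q.2) (hβ : AnalyticAt ℂ β q.2)
    (hγ : AnalyticAt ℂ γ q.2) (hF : AnalyticAt ℂ F q) (hG : AnalyticAt ℂ G q)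
    (hH : AnalyticAt ℂ H q) (hK : AnalyticAt ℂ K q) :
    Qop ε (zetaComb σ α β γ F G H K) q =
      zetaComb σ α β γ (Qop ε F) (Qop ε G) (Qop ε H) (Qop ε K) q := by
  have hnear : ∀ m, Aop ε m (zetaComb σ α β γ F G H K) =ᶠ[𝓝 q]
      zetaComb σ α β γ (Aop ε m F) (Aop ε m G) (Aop ε m H) (Aop ε m K) := by
    intro m
    filter_upwards [hα.eventually_comp_snd, hβ.eventually_comp_snd, hγ.eventually_comp_snd,
      hF.eventually_analyticAt, hG.eventually_analyticAt, hH.eventually_analyticAt,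
      hK.eventually_analyticAt] with y hα hβ hγ hF hG hH hK
    exact Aop_zetaComb hα.differentiableAt hβ.differentiableAt hγ.differentiableAt
      hF.differentiableAt hG.differentiableAt hH.differentiableAt hK.differentiableAt m
  have hterm : ∀ m, Aop ε m (Aop ε m (zetaComb σ α β γ F G H K)) q =
      zetaComb σ α β γ (Aop ε m (Aop ε m F)) (Aop ε m (Aop ε m G)) (Aop ε m (Aop ε m H))
        (Aop ε m (Aop ε m K)) q := by
    intro m
    rw [Aop_congr (hnear m)]
    exact Aop_zetaComb hα.differentiableAt hβ.differentiableAt hγ.differentiableAt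
      (analyticAt_Aop hF m).differentiableAt (analyticAt_Aop hG m).differentiableAt
      (analyticAt_Aop hH m).differentiableAt (analyticAt_Aop hK m).differentiableAt m
  simp only [Qop, hterm, zetaComb, Finset.sum_add_distrib, Finset.sum_sub_distrib, Finset.mul_sum]

section Zgen

variable {a : (Fin n → ℂ) → ℂ} {b c : Fin n → (Fin n → ℂ) → ℂ}

theorem Zgen_apply (k : Fin n) (g : PhaseSpace n → ℂ) (q : PhaseSpace n) :
    Zgen ε σ a b c k g q =
      a q.2 * Aop ε k g q + b k q.2 * Qop ε g q - σ * Eop k g q - c k q.2 * g q :=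
  rfl

theorem Zgen_Zgen_apply (ha : AnalyticAt ℂ a q.2) (hb : ∀ k, AnalyticAt ℂ (b k) q.2)
    (hc : ∀ k, AnalyticAt ℂ (c k) q.2) (hg : AnalyticAt ℂ g q) (j k : Fin n) :
    Zgen ε σ a b c j (Zgen ε σ a b c k g) q =
      a q.2 * (a q.2 * Aop ε j (Aop ε k g) q + b k q.2 * Qop ε (Aop ε j g) q -
          σ * Aop ε j (Eop k g) q - c k q.2 * Aop ε j g q) +
        b j q.2 * (a q.2 * Qop ε (Aop ε k g) q + b k q.2 * Qop ε (Qop ε g) q -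
          σ * Qop ε (Eop k g) q - c k q.2 * Qop ε g q) -
        σ * (a q.2 * (Aop ε k (Eop j g) q - (Pi.single j 1 : Fin n → ℂ) k * g q) +
          b k q.2 * (Qop ε (Eop j g) q - 2 * Aop ε j g q) - σ * Eop j (Eop k g) q -
          c k q.2 * Eop j g q +
          (fderiv ℂ a q.2 (Pi.single j 1) * Aop ε k g q +
            fderiv ℂ (b k) q.2 (Pi.single j 1) * Qop ε g q -
            fderiv ℂ (c k) q.2 (Pi.single j 1) * g q)) -
        c j q.2 * (a q.2 * Aop ε k g q + b k q.2 * Qop ε g q - σ * Eop k g q -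
          c k q.2 * g q) := by
  have hA := analyticAt_Aop (ε := ε) hg k
  have hQ := analyticAt_Qop (ε := ε) hg
  have hE := analyticAt_Eop hg k
  rw [Zgen_apply, Zgen, Aop_zetaComb ha.differentiableAt (hb k).differentiableAt
      (hc k).differentiableAt hA.differentiableAt hQ.differentiableAt hE.differentiableAt
      hg.differentiableAt,
    Qop_zetaComb ha (hb k) (hc k) hA hQ hE hg,
    Eop_zetaComb ha.differentiableAt (hb k).differentiableAt
      (hc k).differentiableAt hA.differentiableAt hQ.differentiableAt hE.differentiableAt
      hg.differentiableAt]
  simp only [zetaComb]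
  rw [Aop_Qop hg, Eop_Aop hg, Eop_Qop hg]

theorem Zgen_comm (ha : AnalyticAt ℂ a q.2) (hb : ∀ k, AnalyticAt ℂ (b k) q.2)
    (hc : ∀ k, AnalyticAt ℂ (c k) q.2) {f : PhaseSpace n → ℂ} (hf : AnalyticAt ℂ f q)
    (hab : ∀ j, fderiv ℂ a q.2 (Pi.single j 1) = -2 * b j q.2)
    (hb_symm : ∀ j k, fderiv ℂ (b k) q.2 (Pi.single j 1) = fderiv ℂ (b j) q.2 (Pi.single k 1))
    (hc_symm : ∀ j k, fderiv ℂ (c k) q.2 (Pi.single j 1) = fderiv ℂ (c j) q.2 (Pi.single k 1))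
    (j k : Fin n) :
    Zgen ε σ a b c j (Zgen ε σ a b c k f) q = Zgen ε σ a b c k (Zgen ε σ a b c j f) q := by
  rw [Zgen_Zgen_apply ha hb hc hf j k, Zgen_Zgen_apply ha hb hc hf k j, Aop_comm hf k j,
    Eop_comm hf k j, Pi.single_comm k]
  linear_combination σ * Aop ε j f q * hab k - σ * Aop ε k f q * hab j -
    σ * Qop ε f q * hb_symm j k + σ * f q * hc_symm j k

end Zgen

def bracket (ζ : Fin n → ℂ) : ℂ := (1 + ∑ k, ζ k ^ 2) ^ ((1 : ℂ) / 2)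

theorem offCut_iff_mem_slitPlane {p : PhaseSpace n} :
    offCut n p ↔ 1 + ∑ k, p.2 k ^ 2 ∈ slitPlane := by
  rw [offCut, mem_slitPlane_iff, not_and_or, not_le]
  tauto

section Bracket

variable {ζ : Fin n → ℂ}

theorem analyticAt_one_add_sum_sq : AnalyticAt ℂ (fun ζ : Fin n → ℂ => 1 + ∑ k, ζ k ^ 2) ζ :=
  analyticAt_const.add (Finset.analyticAt_fun_sum _ fun k _ => (analyticAt_eval ζ k).fun_pow 2)

theorem fderiv_one_add_sum_sq_single (j : Fin n) :
    fderiv ℂ (fun ζ : Fin n → ℂ => 1 + ∑ k, ζ k ^ 2) ζ (Pi.single j 1) = 2 * ζ j := by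
  rw [fderiv_const_add, fderiv_fun_sum fun k _ => (differentiableAt_apply (𝕜 := ℂ) k ζ).fun_pow 2]
  simp [fderiv_fun_pow _ (differentiableAt_apply (𝕜 := ℂ) _ ζ), fderiv_eval_apply, Pi.single_apply]

theorem analyticAt_bracket (hζ : 1 + ∑ k, ζ k ^ 2 ∈ slitPlane) : AnalyticAt ℂ bracket ζ :=
  analyticAt_one_add_sum_sq.cpow analyticAt_const hζ

theorem bracket_ne_zero (hζ : 1 + ∑ k, ζ k ^ 2 ∈ slitPlane) : bracket ζ ≠ 0 := by
  simp [bracket, cpow_eq_zero_iff, slitPlane_ne_zero hζ]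

theorem fderiv_bracket_single (hζ : 1 + ∑ k, ζ k ^ 2 ∈ slitPlane) (j : Fin n) :
    fderiv ℂ bracket ζ (Pi.single j 1) = ζ j / bracket ζ := by
  have hsqrt := (hasStrictDerivAt_cpow_const (c := 1 / 2) hζ).hasDerivAt
  have h : HasFDerivAt bracket _ ζ :=
    (hsqrt.comp_hasFDerivAt ζ analyticAt_one_add_sum_sq.differentiableAt.hasFDerivAt :)
  rw [h.fderiv, smul_apply, fderiv_one_add_sum_sq_single, smul_eq_mul,
    show (1 : ℂ) / 2 - 1 = -(1 / 2) by norm_num, cpow_neg, ← bracket]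
  ring

theorem fderiv_bracket_pow_inv_single (hζ : 1 + ∑ k, ζ k ^ 2 ∈ slitPlane) (m : ℕ)
    (j : Fin n) :
    fderiv ℂ (fun ζ => (bracket ζ ^ m)⁻¹) ζ (Pi.single j 1) =
      -m * ζ j * (bracket ζ ^ (m + 2))⁻¹ := by
  rw [fderiv_pow_inv_apply (analyticAt_bracket hζ).differentiableAt (bracket_ne_zero hζ),
    fderiv_bracket_single hζ]
  field_simp
  ring

theorem fderiv_inv_bracket_single (hζ : 1 + ∑ k, ζ k ^ 2 ∈ slitPlane) (j : Fin n) :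
    fderiv ℂ (fun ζ => (bracket ζ)⁻¹) ζ (Pi.single j 1) =
      -2 * (1 / 2 * (bracket ζ ^ 3)⁻¹ * ζ j) := by
  have h1 := fderiv_bracket_pow_inv_single hζ 1 j
  simp only [pow_one, Nat.cast_one] at h1
  rw [h1]
  ring

theorem analyticAt_bracket_pow_inv_mul (hζ : 1 + ∑ k, ζ k ^ 2 ∈ slitPlane) (C : ℂ) (m : ℕ)
    (k : Fin n) :
    AnalyticAt ℂ (fun ζ => C * (bracket ζ ^ m)⁻¹ * ζ k) ζ :=
  (analyticAt_const.mul (((analyticAt_bracket hζ).pow m).inv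
    (pow_ne_zero m (bracket_ne_zero hζ)))).mul (analyticAt_eval ζ k)

theorem fderiv_bracket_pow_inv_mul_single_comm (hζ : 1 + ∑ k, ζ k ^ 2 ∈ slitPlane)
    (C : ℂ) (m : ℕ) (j k : Fin n) :
    fderiv ℂ (fun ζ => C * (bracket ζ ^ m)⁻¹ * ζ k) ζ (Pi.single j 1) =
      fderiv ℂ (fun ζ => C * (bracket ζ ^ m)⁻¹ * ζ j) ζ (Pi.single k 1) := by
  have hd : DifferentiableAt ℂ (fun ζ => (bracket ζ ^ m)⁻¹) ζ :=
    ((analyticAt_bracket hζ).pow m).inv (pow_ne_zero m (bracket_ne_zero hζ)) |>.differentiableAt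
  have hformula : ∀ j k : Fin n,
      fderiv ℂ (fun ζ => C * (bracket ζ ^ m)⁻¹ * ζ k) ζ (Pi.single j 1) =
        C * (-m * ζ j * ζ k * (bracket ζ ^ (m + 2))⁻¹ +
          (bracket ζ ^ m)⁻¹ * (Pi.single j 1 : Fin n → ℂ) k) := by
    intro j k
    rw [fderiv_fun_mul (hd.const_mul C) (differentiableAt_apply (𝕜 := ℂ) k ζ),
      fderiv_const_mul hd]
    simp only [add_apply, smul_apply, smul_eq_mul, fderiv_eval_apply,
      fderiv_bracket_pow_inv_single hζ]
    ring
  rw [hformula, hformula, Pi.single_comm]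
  ring

end Bracket

theorem Zop_eq_Zgen (h : ℝ) (k : Fin n) :
    Zop n h k = Zgen (h / I) h (fun ζ => (bracket ζ)⁻¹)
      (fun i ζ => 1 / 2 * (bracket ζ ^ 3)⁻¹ * ζ i) (fun i ζ => n / 4 * h * (bracket ζ ^ 2)⁻¹ * ζ i)
      k := by
  funext g p
  have hI : I * ((h : ℂ) / I) = h := mul_div_cancel₀ _ I_ne_zero
  simp only [Zop, Zgen_apply, Qop, Eop, bracket]
  unfold Aop
  linear_combination (-fderiv ℂ g p (0, Pi.single k 1)) * hI

end FBI

theorem Zop_commute_general (n : ℕ) (h : ℝ) (j k : Fin n)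
    (f : (Fin n → ℂ) × (Fin n → ℂ) → ℂ)
    (hf : ∀ p : (Fin n → ℂ) × (Fin n → ℂ), offCut n p → AnalyticAt ℂ f p) :
    ∀ p : (Fin n → ℂ) × (Fin n → ℂ), offCut n p →
      Zop n h j (Zop n h k f) p = Zop n h k (Zop n h j f) p := by
  intro p hp
  have hζ := FBI.offCut_iff_mem_slitPlane.1 hp
  simp only [FBI.Zop_eq_Zgen]
  exact FBI.Zgen_comm ((FBI.analyticAt_bracket hζ).inv (FBI.bracket_ne_zero hζ))
    (FBI.analyticAt_bracket_pow_inv_mul hζ _ 3) (FBI.analyticAt_bracket_pow_inv_mul hζ _ 2)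
    (hf p hp) (FBI.fderiv_inv_bracket_single hζ)
    (FBI.fderiv_bracket_pow_inv_mul_single_comm hζ _ 3)
    (FBI.fderiv_bracket_pow_inv_mul_single_comm hζ _ 2) j k

/-- The operators `Z_j` commute: `[Z_j, Z_k] = 0` on holomorphic functions on the
region where `⟨ζ⟩` is defined and nonvanishing. -/
theorem Zop_commute (n : ℕ) (h : ℝ) (hh : 0 < h) (j k : Fin n)
    (f : (Fin n → ℂ) × (Fin n → ℂ) → ℂ)
    (hf : ∀ p : (Fin n → ℂ) × (Fin n → ℂ), offCut n p → AnalyticAt ℂ f p) :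
    ∀ p : (Fin n → ℂ) × (Fin n → ℂ), offCut n p →
      Zop n h j (Zop n h k f) p = Zop n h k (Zop n h j f) p :=
  Zop_commute_general n h j k f hf

end
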